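/- Let s₁, s₂ ∈ ℝ with -1 ≤ s₁ - s₂ ≤ 1 and k ≠ 0 an integer, ξ ∈ ℝ, t ∈ ℝ. Then (k² + ξ²)^{(s₁+1)/2} / ((ξ - tk)² + k²) ≤ C ⟨t⟩^{1 + s₁ - s₂} (k² + ξ²)^{s₂/2} for an absolute constant C (independent of k, ξ, t, s₁, s₂ in the admissible range). -/

import Mathlib

/-!
Writing `ξ = (ξ - t k) + t k` gives `k² + ξ² ≤ 2 ⟨t⟩² ((ξ - t k)² + k²)`. Raising this to the power
`θ = (1 + s₁ - s₂)/2 ∈ [0, 1]` costs nothing on the right, since `(ξ - t k)² + k² ≥ 1` for `k ≠ 0`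
and `x ^ θ ≤ x` for `x ≥ 1`. Multiplying by `(k² + ξ²)^{s₂/2}` gives the estimate with `C = 2`.
-/

open Real

lemma sq_add_sq_le_two_mul_one_add_sq_mul (k ξ t : ℝ) :
    k ^ 2 + ξ ^ 2 ≤ 2 * ((ξ - t * k) ^ 2 + k ^ 2) * (1 + t ^ 2) := by
  nlinarith [sq_nonneg (ξ - 2 * t * k), sq_nonneg (t * (ξ - t * k)), sq_nonneg (k * t)]

lemma one_le_intCast_sq {k : ℤ} (hk : k ≠ 0) : (1 : ℝ) ≤ (k : ℝ) ^ 2 := by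
  rw [one_le_sq_iff_one_le_abs, ← Int.cast_abs]
  exact_mod_cast Int.one_le_abs hk

lemma rpow_le_mul_rpow_of_le_mul_sq {A B τ p : ℝ} (hA : 0 ≤ A) (hB : 1 ≤ B) (hτ : 0 ≤ τ)
    (hp₀ : 0 ≤ p) (hp₁ : p ≤ 1) (h : A ≤ B * τ ^ 2) :
    A ^ p ≤ B * τ ^ (2 * p) :=
  calc A ^ p ≤ (B * τ ^ 2) ^ p := rpow_le_rpow hA h hp₀
    _ = B ^ p * τ ^ (2 * p) := by
      rw [mul_rpow (by linarith) (by positivity), ← rpow_natCast_mul hτ, Nat.cast_ofNat]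
    _ ≤ B * τ ^ (2 * p) := by gcongr; exact rpow_le_self_of_one_le hB hp₁

/-- For `-1 ≤ s₁ - s₂ ≤ 1`, `k ≠ 0`: the symbol estimate
`(k² + ξ²)^{(s₁+1)/2} / ((ξ - tk)² + k²) ≤ C ⟨t⟩^{1 + s₁ - s₂} (k² + ξ²)^{s₂/2}`
with an absolute constant `C`. -/
theorem symbol_interpolation_bound :
    ∃ C : ℝ, 0 < C ∧ ∀ (s₁ s₂ t : ℝ) (k : ℤ) (ξ : ℝ), k ≠ 0 →
      -1 ≤ s₁ - s₂ → s₁ - s₂ ≤ 1 →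
      ((k:ℝ)^2 + ξ^2) ^ ((s₁ + 1)/2) / ((ξ - t*k)^2 + (k:ℝ)^2) ≤
        C * (Real.sqrt (1 + t^2)) ^ (1 + s₁ - s₂) * ((k:ℝ)^2 + ξ^2) ^ (s₂/2) := by
  refine ⟨2, two_pos, fun s₁ s₂ t k ξ hk h₁ h₂ => ?_⟩
  have hk2 := one_le_intCast_sq hk
  set A := (k : ℝ) ^ 2 + ξ ^ 2
  set B := (ξ - t * k) ^ 2 + (k : ℝ) ^ 2
  have hA : 0 < A := by positivity
  have hB : 1 ≤ B := by nlinarith [sq_nonneg (ξ - t * k)]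
  have hτ : A ≤ 2 * B * √(1 + t ^ 2) ^ 2 := by
    rw [sq_sqrt (by positivity)]
    exact sq_add_sq_le_two_mul_one_add_sq_mul _ _ _
  have hθ : A ^ ((1 + s₁ - s₂) / 2) ≤ 2 * B * √(1 + t ^ 2) ^ (1 + s₁ - s₂) := by
    have := rpow_le_mul_rpow_of_le_mul_sq (p := (1 + s₁ - s₂) / 2) hA.le (by linarith)
      (sqrt_nonneg _) (by linarith) (by linarith) hτ
    rwa [mul_div_cancel₀ _ two_ne_zero] at this
  have hsplit : A ^ ((s₁ + 1) / 2) = A ^ ((1 + s₁ - s₂) / 2) * A ^ (s₂ / 2) := by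
    rw [← rpow_add hA]; ring_nf
  rw [div_le_iff₀ (by linarith), hsplit]
  calc A ^ ((1 + s₁ - s₂) / 2) * A ^ (s₂ / 2)
      ≤ 2 * B * √(1 + t ^ 2) ^ (1 + s₁ - s₂) * A ^ (s₂ / 2) := by gcongr
    _ = _ := by ring
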